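/- For any positive integers m_1, m_2, …, m_n (n ≥ 1), z( lcm(m_1, m_2, …, m_n) ) = lcm( z(m_1), z(m_2), …, z(m_n) ). -/

import Mathlib

/-!
The indices `k` with `d ∣ F_k` are exactly the multiples of `z d`: this follows from
`gcd (F_a, F_b) = F_{gcd (a, b)}` once some `k > 0` has `d ∣ F_k`, which holds for `d > 0` because
`(a, b) ↦ (b, a + b)` is a bijection of `(ℤ/d)²`, so the orbit of `(F_0, F_1) = (0, 1)` is periodic.
Hence `lcm (m₁, …, mₙ) ∣ F_k` iff every `z mᵢ ∣ k` iff `lcm (z m₁, …, z mₙ) ∣ k`, and a natural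
number is determined by its multiples.
-/

/-- The order of appearance of `n` in the Fibonacci sequence: the smallest
positive integer `ℓ` such that `n` divides the `ℓ`-th Fibonacci number. -/
noncomputable def z (n : ℕ) : ℕ := sInf {ℓ : ℕ | 0 < ℓ ∧ n ∣ Nat.fib ℓ}

section FibStep

variable {R : Type*}

def fibStep [Add R] (p : R × R) : R × R := (p.2, p.1 + p.2)

theorem fibStep_injective [Add R] [IsRightCancelAdd R] : Function.Injective (fibStep (R := R)) := by
  rintro ⟨a, b⟩ ⟨a', b'⟩ h
  simp only [fibStep, Prod.mk.injEq] at h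
  obtain ⟨rfl, h⟩ := h
  rw [add_right_cancel h]

theorem fibStep_iterate_zero_one [AddMonoidWithOne R] (k : ℕ) :
    fibStep^[k] ((0, 1) : R × R) = ((Nat.fib k : R), (Nat.fib (k + 1) : R)) := by
  induction k with
  | zero => simp
  | succ k ih => simp [Function.iterate_succ_apply', ih, fibStep, Nat.fib_add_two]

end FibStep

theorem exists_pos_dvd_fib {n : ℕ} (hn : n ≠ 0) : ∃ ℓ, 0 < ℓ ∧ n ∣ Nat.fib ℓ := by
  have : NeZero n := ⟨hn⟩
  obtain ⟨ℓ, hℓ, hper⟩ :=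
    Function.mem_periodicPts.mp (fibStep_injective.mem_periodicPts ((0, 1) : ZMod n × ZMod n))
  refine ⟨ℓ, hℓ, (ZMod.natCast_eq_zero_iff _ _).mp ?_⟩
  have := congrArg Prod.fst hper
  rwa [fibStep_iterate_zero_one] at this

-- `F_ℓ ≠ 0` for `ℓ > 0`, so `z 0` is the junk value `sInf ∅ = 0`.
theorem z_zero : z 0 = 0 := by
  simp [z, Nat.fib_eq_zero, Nat.pos_iff_ne_zero]

theorem dvd_fib_iff_z_dvd (n k : ℕ) : n ∣ Nat.fib k ↔ z n ∣ k := by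
  rcases eq_or_ne n 0 with rfl | hn
  · simp [z_zero, Nat.fib_eq_zero]
  obtain ⟨hz, hdvd⟩ : 0 < z n ∧ n ∣ Nat.fib (z n) := Nat.sInf_mem (exists_pos_dvd_fib hn)
  refine ⟨fun h => ?_, fun h => hdvd.trans (Nat.fib_dvd _ _ h)⟩
  have hgcd : n ∣ Nat.fib (Nat.gcd k (z n)) := by
    rw [Nat.fib_gcd]
    exact Nat.dvd_gcd h hdvd
  have hmin : z n ≤ Nat.gcd k (z n) := Nat.sInf_le ⟨Nat.gcd_pos_of_pos_right _ hz, hgcd⟩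
  have : Nat.gcd k (z n) = z n := le_antisymm (Nat.le_of_dvd hz (Nat.gcd_dvd_right _ _)) hmin
  exact this ▸ Nat.gcd_dvd_left _ _

theorem List.foldr_lcm_dvd_iff {l : List ℕ} {k : ℕ} :
    l.foldr Nat.lcm 1 ∣ k ↔ ∀ m ∈ l, m ∣ k := by
  induction l with
  | nil => simp
  | cons a l ih => simp [Nat.lcm_dvd_iff, ih]

theorem z_lcm_list_general (l : List ℕ) :
    z (l.foldr Nat.lcm 1) = (l.map z).foldr Nat.lcm 1 := by
  refine Nat.dvd_right_iff_eq.mp fun k => ?_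
  rw [← dvd_fib_iff_z_dvd, List.foldr_lcm_dvd_iff, List.foldr_lcm_dvd_iff, List.forall_mem_map]
  exact forall₂_congr fun m _ => dvd_fib_iff_z_dvd m k

theorem z_lcm_list (l : List ℕ) (hl : l ≠ []) (hpos : ∀ m ∈ l, 0 < m) :
    z (l.foldr Nat.lcm 1) = (l.map z).foldr Nat.lcm 1 :=
  z_lcm_list_general l
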